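/- Sampling complexity lower bound: For each n < m with n dividing m, let A be the m×n matrix with A_{ij} = √(n/m) if j = ⌈(n/m)·i⌉ and 0 otherwise. Then A has orthonormal columns, ‖A‖₂ = 1, ‖A‖_F = √n, and if d rows of A are sampled independently and uniformly with d < (1/10) n log n, then with probability bounded away from 0, the sampled submatrix à has a zero column, and hence ‖A − A P_n‖₂ ≥ 1 for P_n the projection onto the span of all right singular vectors of Ã, while σ_{n+1}(A) = 0. -/

import Mathlib

/-!
Write `m = n k`. Row `i` of `A` has a single nonzero entry `1/√k`, in column `i / k`, so `A` is
the normalised incidence matrix of a partition of the rows into `n` blocks of size `k`. Its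
columns are therefore orthonormal, which gives `‖A‖₂ = 1`, `‖A‖_F = √n`, and
`‖(A - AP) e_j‖ = ‖A e_j‖ = 1` whenever `P e_j = 0`.

A sample of `d` rows misses column `j` iff none of the sampled rows lies in block `j`. The blocks
of independent uniform rows are independent and uniform on `Fin n`, so this is the coupon
collector problem. For the number `X` of missed coupons, `E X = n (1 - 1/n)^d` and
`E X² = E X + n (n - 1) (1 - 2/n)^d`, and the second moment method `P(X > 0) ≥ (E X)² / E X²`
gives probability at least `1/2` once `(n / (n - 1))^d ≤ n`, which holds for `d ≤ (n - 1) log n`.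
-/

open scoped Classical
noncomputable section

/-- Spectral (ℓ₂→ℓ₂ operator) norm of a real matrix. -/
def spec {m n : ℕ} (A : Matrix (Fin m) (Fin n) ℝ) : ℝ :=
  ‖LinearMap.toContinuousLinearMap (Matrix.toEuclideanLin A)‖

/-- Frobenius norm. -/
def frob {m n : ℕ} (A : Matrix (Fin m) (Fin n) ℝ) : ℝ :=
  Real.sqrt (∑ i, ∑ j, (A i j) ^ 2)

/-- k-th largest value (0-indexed) of a finite family, 0 beyond range. -/
def kthVal {n : ℕ} (f : Fin n → ℝ) (k : ℕ) : ℝ :=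
  ((List.ofFn f).insertionSort (fun a b => b ≤ a)).getD k 0

theorem Matrix.isHermitian_transpose_mul_self {m n : ℕ} (A : Matrix (Fin m) (Fin n) ℝ) :
    (A.transpose * A).IsHermitian := by
  simpa [Matrix.conjTranspose_eq_transpose_of_trivial] using
    Matrix.isHermitian_conjTranspose_mul_self A

/-- (k+1)-st largest singular value (0-indexed k). -/
def singVal {m n : ℕ} (A : Matrix (Fin m) (Fin n) ℝ) (k : ℕ) : ℝ :=
  Real.sqrt (kthVal (Matrix.isHermitian_transpose_mul_self A).eigenvalues k)

/-- The lower-bound example: the `m × n` matrix with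
`A_{ij} = √(n/m) δ_{⌈(n/m)i⌉, j}` (1-indexed). -/
def lowerMatrix (m n : ℕ) : Matrix (Fin m) (Fin n) ℝ :=
  Matrix.of fun i j =>
    if (j : ℕ) + 1 = ⌈((n : ℝ) / m) * ((i : ℕ) + 1)⌉₊ then Real.sqrt ((n : ℝ) / m)
    else 0

section OrthonormalColumns

open scoped Matrix

variable {m n : ℕ} {A : Matrix (Fin m) (Fin n) ℝ}

theorem norm_toEuclideanLin_le_spec (B : Matrix (Fin m) (Fin n) ℝ)
    (x : EuclideanSpace ℝ (Fin n)) : ‖Matrix.toEuclideanLin B x‖ ≤ spec B * ‖x‖ :=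
  (LinearMap.toContinuousLinearMap (Matrix.toEuclideanLin B)).le_opNorm x

theorem norm_toEuclideanLin_of_transpose_mul_self (hA : Aᵀ * A = 1)
    (x : EuclideanSpace ℝ (Fin n)) : ‖Matrix.toEuclideanLin A x‖ = ‖x‖ := by
  have hdot : A *ᵥ x.ofLp ⬝ᵥ A *ᵥ x.ofLp = x.ofLp ⬝ᵥ x.ofLp := by
    rw [Matrix.dotProduct_mulVec, ← Matrix.mulVec_transpose, Matrix.mulVec_mulVec, hA,
      Matrix.one_mulVec]
  rw [← sq_eq_sq₀ (norm_nonneg _) (norm_nonneg _), ← real_inner_self_eq_norm_sq,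
    ← real_inner_self_eq_norm_sq, Matrix.toLpLin_apply, ← WithLp.toLp_ofLp (p := 2) x,
    EuclideanSpace.inner_toLp_toLp, EuclideanSpace.inner_toLp_toLp]
  simpa using hdot

theorem spec_eq_one_of_transpose_mul_self (hn : 0 < n) (hA : Aᵀ * A = 1) : spec A = 1 := by
  have : Nonempty (Fin n) := ⟨⟨0, hn⟩⟩
  exact (LinearIsometry.mk (Matrix.toEuclideanLin A)
    (norm_toEuclideanLin_of_transpose_mul_self hA)).norm_toContinuousLinearMap

theorem one_le_spec_sub_mul_of_mulVec_single_eq_zero (hA : Aᵀ * A = 1)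
    {P : Matrix (Fin n) (Fin n) ℝ} {j : Fin n} (hP : P *ᵥ Pi.single j 1 = 0) :
    1 ≤ spec (A - A * P) := by
  have hsub : (A - A * P) *ᵥ Pi.single j 1 = A *ᵥ Pi.single j 1 := by
    rw [Matrix.sub_mulVec, ← Matrix.mulVec_mulVec, hP, Matrix.mulVec_zero, sub_zero]
  have h := norm_toEuclideanLin_le_spec (A - A * P) (EuclideanSpace.single j 1)
  rwa [Matrix.toLpLin_apply, PiLp.ofLp_single, hsub, ← PiLp.ofLp_single, ← Matrix.toLpLin_apply,
    norm_toEuclideanLin_of_transpose_mul_self hA, PiLp.norm_single, norm_one, mul_one] at h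

theorem frob_eq_sqrt_of_transpose_mul_self (hA : Aᵀ * A = 1) : frob A = √n := by
  have hcol : ∀ j, ∑ i, A i j ^ 2 = 1 := fun j => by
    simpa [Matrix.mul_apply, sq] using congrFun (congrFun hA j) j
  rw [frob, Finset.sum_comm]
  simp [hcol]

-- `A` has only `n` singular values; past them `kthVal` returns its default `0`.
theorem singVal_eq_zero_of_le (A : Matrix (Fin m) (Fin n) ℝ) {k : ℕ} (hk : n ≤ k) :
    singVal A k = 0 := by
  rw [singVal, kthVal, List.getD_eq_default, Real.sqrt_zero]
  rwa [List.length_insertionSort, List.length_ofFn]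

end OrthonormalColumns

section BlockStructure

open Finset

theorem Nat.ceil_add_one_div (i : ℕ) {k : ℕ} (hk : 0 < k) :
    ⌈((i : ℝ) + 1) / k⌉₊ = i / k + 1 := by
  have hk' : (0 : ℝ) < k := by exact_mod_cast hk
  rw [Nat.ceil_eq_iff (Nat.succ_ne_zero _), Nat.add_one_sub_one, lt_div_iff₀ hk',
    div_le_iff₀ hk']
  have hlow : i / k * k < i + 1 := (Nat.div_mul_le_self i k).trans_lt (Nat.lt_succ_self i)
  have hup : i + 1 ≤ (i / k + 1) * k := by rw [Nat.succ_mul]; exact Nat.lt_div_mul_add hk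
  exact ⟨by exact_mod_cast hlow, by exact_mod_cast hup⟩

theorem lowerMatrix_apply {n k : ℕ} (i : Fin (n * k)) (j : Fin n) :
    lowerMatrix (n * k) n i j = if i.divNat = j then (√k)⁻¹ else 0 := by
  have hk : 0 < k := Nat.pos_of_mul_pos_left i.pos
  have hn : 0 < n := Nat.pos_of_mul_pos_right i.pos
  have hratio : (n : ℝ) / (n * k : ℕ) = (k : ℝ)⁻¹ := by
    push_cast; field_simp
  simp only [lowerMatrix, Matrix.of_apply, hratio, Real.sqrt_inv, ← div_eq_inv_mul,
    Nat.ceil_add_one_div _ hk, Nat.add_right_cancel_iff, Fin.ext_iff, Fin.coe_divNat, eq_comm]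

theorem lowerMatrix_eq_zero_iff {n k : ℕ} (i : Fin (n * k)) (j : Fin n) :
    lowerMatrix (n * k) n i j = 0 ↔ i.divNat ≠ j := by
  have hk : (0 : ℝ) < k := by exact_mod_cast Nat.pos_of_mul_pos_left i.pos
  rw [lowerMatrix_apply, ite_eq_right_iff]
  simp only [inv_eq_zero, Real.sqrt_eq_zero', not_le.2 hk, imp_false]

theorem card_divNat_eq {n k : ℕ} (a : Fin n) : #{x : Fin (n * k) | x.divNat = a} = k := by
  conv_rhs => rw [← Fintype.card_fin k, ← card_univ]
  refine card_nbij' Fin.modNat (Fin.mkDivMod a) (fun _ _ => mem_coe.2 (mem_univ _))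
    (fun _ _ => by simp) (fun x hx => ?_) (fun _ _ => by simp)
  rw [mem_coe, mem_filter] at hx
  rw [← hx.2, Fin.divNat_mkDivMod_modNat]

theorem lowerMatrix_transpose_mul_self (n : ℕ) {k : ℕ} (hk : 0 < k) :
    (lowerMatrix (n * k) n).transpose * lowerMatrix (n * k) n = 1 := by
  ext j j'
  simp only [Matrix.mul_apply, Matrix.transpose_apply, lowerMatrix_apply]
  rcases eq_or_ne j j' with rfl | hne
  · have hterm : ∀ x : Fin (n * k), ((if x.divNat = j then (√k)⁻¹ else 0) *
        if x.divNat = j then (√k)⁻¹ else 0) = if x.divNat = j then (k : ℝ)⁻¹ else 0 := fun x => by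
      split_ifs
      · rw [← mul_inv, Real.mul_self_sqrt (Nat.cast_nonneg k)]
      · rw [mul_zero]
    simp only [hterm, ← sum_filter, sum_const, card_divNat_eq, nsmul_eq_mul, Matrix.one_apply_eq]
    exact mul_inv_cancel₀ (by positivity)
  · have hterm : ∀ x : Fin (n * k), ((if x.divNat = j then (√k)⁻¹ else 0) *
        if x.divNat = j' then (√k)⁻¹ else 0) = 0 := fun x => by
      split_ifs <;> simp_all
    simp [hterm, hne]

end BlockStructure

section CouponCollector

open Finset Fintype

variable {ι α : Type*} [Fintype ι] [Fintype α] [DecidableEq α]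

def missed (g : ι → α) : Finset α := {a | ∀ i, g i ≠ a}

theorem missed_nonempty_iff {g : ι → α} : (missed g).Nonempty ↔ ¬ Function.Surjective g := by
  simp [missed, Function.Surjective, Finset.Nonempty]

variable [DecidableEq ι]

theorem card_filter_forall_mem (s : Finset α) :
    #{g : ι → α | ∀ i, g i ∈ s} = #s ^ card ι := by
  have : ({g : ι → α | ∀ i, g i ∈ s} : Finset (ι → α)) = piFinset fun _ => s := by
    ext g; simp
  rw [this, card_piFinset, prod_const, card_univ]

theorem card_filter_forall_notMem (s : Finset α) :
    #{g : ι → α | ∀ i, g i ∉ s} = (card α - #s) ^ card ι := by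
  simpa [card_compl] using card_filter_forall_mem (ι := ι) sᶜ

theorem sum_card_missed :
    ∑ g : ι → α, #(missed g) = card α * (card α - 1) ^ card ι := by
  have hdouble := sum_card_bipartiteAbove_eq_sum_card_bipartiteBelow (s := univ) (t := univ)
    (fun (g : ι → α) a => ∀ i, g i ≠ a)
  calc ∑ g : ι → α, #(missed g) = ∑ a, #{g : ι → α | ∀ i, g i ∉ ({a} : Finset α)} := by
        simpa [missed, bipartiteAbove, bipartiteBelow] using hdouble
    _ = card α * (card α - 1) ^ card ι := by
        simp only [card_filter_forall_notMem, card_singleton, sum_const, card_univ, smul_eq_mul]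

theorem sum_card_missed_sq :
    ∑ g : ι → α, #(missed g) ^ 2 =
      card α * (card α - 1) ^ card ι + card α * (card α - 1) * (card α - 2) ^ card ι := by
  have hsq : ∀ g : ι → α, #(missed g) ^ 2 =
      #{p : α × α | ∀ i, g i ∉ ({p.1, p.2} : Finset α)} := fun g => by
    rw [sq, ← card_product]
    congr 1
    ext p
    simp [missed, forall_and]
  have hrow : ∀ a : α, ∑ b, (card α - #({a, b} : Finset α)) ^ card ι =
      (card α - 1) ^ card ι + (card α - 1) * (card α - 2) ^ card ι := fun a => by
    rw [← add_sum_erase _ _ (mem_univ a), pair_eq_singleton, card_singleton,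
      Finset.sum_congr rfl fun b hb => by rw [card_pair (ne_of_mem_erase hb).symm], sum_const,
      card_erase_of_mem (mem_univ a), card_univ, smul_eq_mul]
  have hdouble := sum_card_bipartiteAbove_eq_sum_card_bipartiteBelow (s := univ) (t := univ)
    (fun (g : ι → α) (p : α × α) => ∀ i, g i ∉ ({p.1, p.2} : Finset α))
  calc ∑ g : ι → α, #(missed g) ^ 2
      = ∑ p : α × α, #{g : ι → α | ∀ i, g i ∉ ({p.1, p.2} : Finset α)} := by
        simpa only [hsq, bipartiteAbove, bipartiteBelow] using hdouble
    _ = ∑ a, ∑ b, (card α - #({a, b} : Finset α)) ^ card ι := by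
        simp only [card_filter_forall_notMem, ← univ_product_univ, sum_product]
    _ = _ := by simp only [hrow, sum_const, card_univ, smul_eq_mul, mul_add, mul_assoc]

theorem sq_sum_le_card_filter_ne_zero_mul_sum_sq {β : Type*} [Fintype β] (X : β → ℕ) :
    (∑ x, X x) ^ 2 ≤ #{x | X x ≠ 0} * ∑ x, X x ^ 2 := by
  rw [← sum_filter_ne_zero]
  calc (∑ x ∈ {x | X x ≠ 0}, X x) ^ 2 ≤ #{x | X x ≠ 0} * ∑ x ∈ {x | X x ≠ 0}, X x ^ 2 :=
        sq_sum_le_card_mul_sum_sq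
    _ ≤ #{x | X x ≠ 0} * ∑ x, X x ^ 2 := by gcongr; exact subset_univ _

theorem pow_le_mul_sub_one_pow {x : ℝ} (hx : 1 < x) {d : ℕ} (hd : d ≤ (x - 1) * Real.log x) :
    x ^ d ≤ x * (x - 1) ^ d := by
  have hx1 : 0 < x - 1 := sub_pos.2 hx
  have hexp : 1 + (x - 1)⁻¹ ≤ Real.exp (x - 1)⁻¹ := by linarith [Real.add_one_le_exp (x - 1)⁻¹]
  have hdlog : d * (x - 1)⁻¹ ≤ Real.log x := by
    rw [← div_eq_mul_inv, div_le_iff₀ hx1, mul_comm]; exact hd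
  calc x ^ d = (1 + (x - 1)⁻¹) ^ d * (x - 1) ^ d := by
        rw [← mul_pow, add_mul, one_mul, inv_mul_cancel₀ hx1.ne', sub_add_cancel]
    _ ≤ Real.exp (x - 1)⁻¹ ^ d * (x - 1) ^ d := by gcongr
    _ = Real.exp (d * (x - 1)⁻¹) * (x - 1) ^ d := by rw [Real.exp_nat_mul]
    _ ≤ Real.exp (Real.log x) * (x - 1) ^ d := by gcongr
    _ = x * (x - 1) ^ d := by rw [Real.exp_log (by linarith)]

theorem card_pow_le_two_mul_card_not_surjective (hα : 2 ≤ card α)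
    (hι : (card ι : ℝ) ≤ (card α - 1) * Real.log (card α)) :
    card α ^ card ι ≤ 2 * #{g : ι → α | ¬ Function.Surjective g} := by
  set c := card α
  set d := card ι
  set E := #{g : ι → α | ¬ Function.Surjective g}
  set a := (c - 1) ^ d
  set S := c * a + c * (c - 1) * (c - 2) ^ d
  have hsecond : (c * a) ^ 2 ≤ E * S := by
    have h := sq_sum_le_card_filter_ne_zero_mul_sum_sq fun g : ι → α => #(missed g)
    simpa only [sum_card_missed, sum_card_missed_sq, ne_eq, card_eq_zero,
      ← not_nonempty_iff_eq_empty, not_not, missed_nonempty_iff] using h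
  have hgrowth : c ^ d ≤ c * a := by
    have h := pow_le_mul_sub_one_pow (by exact_mod_cast hα) hι
    rw [← Nat.cast_pred (by omega)] at h
    exact_mod_cast h
  have hpair : c ^ d * (c - 2) ^ d ≤ a ^ 2 := by
    rw [← mul_pow, ← pow_mul, mul_comm d, pow_mul]
    gcongr
    zify [hα, (by omega : 1 ≤ c)]
    nlinarith
  have hS : 0 < S := by
    have : 0 < a := Nat.pow_pos (by omega)
    positivity
  refine Nat.le_of_mul_le_mul_right ?_ hS
  calc c ^ d * S = c * (c ^ d * a) + c * (c - 1) * (c ^ d * (c - 2) ^ d) := by ring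
    _ ≤ c * (c * a * a) + c * (c - 1) * a ^ 2 := by gcongr
    _ ≤ 2 * (c * a) ^ 2 := by
        have : c - 1 ≤ c := Nat.sub_le c 1
        nlinarith
    _ ≤ 2 * E * S := by rw [mul_assoc]; gcongr

end CouponCollector

section RowSampling

open Finset

theorem card_filter_comp_eq_mul_pow {ι α β : Type*} [Fintype ι] [DecidableEq ι] [Fintype α]
    [DecidableEq α] [Fintype β] (b : β → α) {k : ℕ} (hb : ∀ a, #{x | b x = a} = k)
    (Q : (ι → α) → Prop) [DecidablePred Q] :
    #{f : ι → β | Q (b ∘ f)} = #{g : ι → α | Q g} * k ^ Fintype.card ι := by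
  have hfiber : ∀ g : ι → α, #{f : ι → β | b ∘ f = g} = k ^ Fintype.card ι := fun g => by
    have : ({f : ι → β | b ∘ f = g} : Finset (ι → β)) =
        Fintype.piFinset fun i => {x | b x = g i} := by
      ext f; simp [funext_iff]
    rw [this, Fintype.card_piFinset, Finset.prod_congr rfl fun i _ => hb (g i), prod_const,
      card_univ]
  rw [card_eq_sum_card_fiberwise (f := (b ∘ ·)) (t := {g | Q g})
    (fun f hf => by simpa using hf), ← smul_eq_mul, ← sum_const]
  refine Finset.sum_congr rfl fun g hg => ?_
  rw [← hfiber g]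
  congr 1
  ext f
  simp only [mem_filter, mem_univ, true_and, and_iff_right_iff_imp]
  rintro rfl
  simpa using hg

theorem lowerMatrix_sample_has_zero_column {n k d : ℕ} (hn : 2 ≤ n) (hk : 0 < k)
    (hd : (d : ℝ) ≤ (n - 1) * Real.log n) :
    (1 : ℝ) / 2 ≤ (#{f : Fin d → Fin (n * k) | ∃ j, ∀ i, lowerMatrix (n * k) n (f i) j = 0} : ℝ) /
      Fintype.card (Fin d → Fin (n * k)) := by
  set E := #{g : Fin d → Fin n | ¬ Function.Surjective g}
  have hzero : ∀ f : Fin d → Fin (n * k), (∃ j, ∀ i, lowerMatrix (n * k) n (f i) j = 0) ↔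
      ¬ Function.Surjective (Fin.divNat ∘ f) := fun f => by
    simp [lowerMatrix_eq_zero_iff, Function.Surjective]
  have hcount :
      #{f : Fin d → Fin (n * k) | ∃ j, ∀ i, lowerMatrix (n * k) n (f i) j = 0} = E * k ^ d := by
    simp only [hzero]
    simpa using card_filter_comp_eq_mul_pow (ι := Fin d) (Fin.divNat (m := n) (n := k))
      card_divNat_eq (fun g => ¬ Function.Surjective g)
  have hcoupon : (n : ℝ) ^ d ≤ 2 * E := by
    have h := card_pow_le_two_mul_card_not_surjective (ι := Fin d) (α := Fin n)
      (by simpa using hn) (by simpa using hd)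
    simp only [Fintype.card_fin] at h
    exact_mod_cast h
  have hk' : (0 : ℝ) < k ^ d := pow_pos (Nat.cast_pos.2 hk) d
  rw [hcount, Fintype.card_fun, Fintype.card_fin, Fintype.card_fin, le_div_iff₀ (by positivity)]
  push_cast
  rw [mul_pow]
  nlinarith

end RowSampling

/-- Optimality of the sample complexity `O(r log r)`.  For `n < m`, `n ∣ m`,
the matrix `lowerMatrix m n` has orthonormal columns, `‖A‖₂ = 1`,
`‖A‖_F = √n` (so `r = n`) and `σ_{n+1}(A) = 0`.  Moreover, if
`d < (1/10) n log n` rows are sampled independently and uniformly, then (for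
`n` large) with probability at least `1/2` the sampled submatrix has a zero
column `j₀`; and whenever this happens, every projection `P` annihilating
`e_{j₀}` — in particular the orthogonal projection onto the right singular
vectors of the sample — satisfies `‖A − AP‖₂ ≥ 1`. -/
theorem sample_complexity_lower_bound :
    ∃ N : ℕ, ∀ m n : ℕ, N ≤ n → n < m → n ∣ m →
      (lowerMatrix m n).transpose * lowerMatrix m n = 1 ∧
      spec (lowerMatrix m n) = 1 ∧
      frob (lowerMatrix m n) = Real.sqrt n ∧
      singVal (lowerMatrix m n) n = 0 ∧
      ∀ d : ℕ,
        (d : ℝ) < (1 / 10) * n * Real.log n →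
        ((1 : ℝ) / 2 ≤
          ((Finset.univ.filter
              (fun f : Fin d → Fin m =>
                ∃ j₀ : Fin n, ∀ i : Fin d, lowerMatrix m n (f i) j₀ = 0)).card : ℝ)
            / (Fintype.card (Fin d → Fin m))) ∧
        ∀ (f : Fin d → Fin m) (j₀ : Fin n),
          (∀ i : Fin d, lowerMatrix m n (f i) j₀ = 0) →
          ∀ P : Matrix (Fin n) (Fin n) ℝ,
            P.mulVec (Pi.single j₀ 1) = 0 →
            1 ≤ spec (lowerMatrix m n - lowerMatrix m n * P) := by
  refine ⟨2, fun m n hn hnm ⟨k, hm⟩ => ?_⟩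
  subst hm
  have hk : 0 < k := Nat.pos_of_mul_pos_left ((Nat.zero_le n).trans_lt hnm)
  have hA := lowerMatrix_transpose_mul_self n hk
  refine ⟨hA, spec_eq_one_of_transpose_mul_self (by omega) hA,
    frob_eq_sqrt_of_transpose_mul_self hA, singVal_eq_zero_of_le _ le_rfl, fun d hd =>
    ⟨lowerMatrix_sample_has_zero_column hn hk ?_,
      fun _ _ _ _ hP => one_le_spec_sub_mul_of_mulVec_single_eq_zero hA hP⟩⟩
  have hn' : (2 : ℝ) ≤ n := by exact_mod_cast hn
  have hlog : 0 ≤ Real.log n := Real.log_nonneg (by linarith)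
  nlinarith
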